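/- arXiv:1804.10154 — 4 statements merged into one kernel-verified Lean document; each statement's English description precedes it below -/
import Mathlib

section
/- Let a, b > 0 and β ∈ ℝ. Then there exists a constant C > 0 (depending only on a, b, β) such that for every s ≥ 1, ∫₀^∞ t^{β−1} e^{−a t − b s²/t} dt ≤ C · e^{−(1/2)√(ab) · s}. -/
/-!
Split the exponent in halves: by AM-GM, `(a/2) t + (b/2) s²/t ≥ √(ab) s`, and since `s ≥ 1`,
`(a/2) t + (b/2) s²/t ≥ (a/2) t + (b/2)/t`. Hence the integral is at most `e^{-√(ab) s}` times
the `s`-independent integral of `t^{β-1} e^{-(a/2) t - (b/2)/t}`, which converges at `0` because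
`e^{-d/t} ≤ n! tⁿ / dⁿ` for every `n`.
-/

open MeasureTheory Real Set
open scoped Nat

theorem exp_neg_div_le_mul_pow {d t : ℝ} (hd : 0 < d) (ht : 0 < t) (n : ℕ) :
    exp (-(d / t)) ≤ n ! / d ^ n * t ^ n := by
  have hx : 0 < d / t := by positivity
  rw [exp_neg, inv_le_comm₀ (exp_pos _) (by positivity)]
  calc (n ! / d ^ n * t ^ n)⁻¹ = (d / t) ^ n / n ! := by rw [div_pow]; field_simp
    _ ≤ exp (d / t) := pow_div_factorial_le_exp _ hx.le n

theorem integrableOn_rpow_mul_exp_neg_mul_sub_div (β : ℝ) {c d : ℝ} (hc : 0 < c) (hd : 0 < d) :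
    IntegrableOn (fun t : ℝ => t ^ (β - 1) * exp (-c * t - d / t)) (Ioi 0) := by
  obtain ⟨n, hn⟩ := exists_nat_gt (-β)
  have hdom : IntegrableOn (fun t : ℝ => n ! / d ^ n * (t ^ (β - 1 + n) * exp (-c * t ^ (1 : ℝ))))
      (Ioi 0) :=
    (integrableOn_rpow_mul_exp_neg_mul_rpow (by linarith) zero_lt_one hc).const_mul _
  refine hdom.mono' (by fun_prop) ?_
  filter_upwards [ae_restrict_mem measurableSet_Ioi] with t (ht : 0 < t)
  rw [norm_of_nonneg (by positivity), rpow_one, rpow_add ht, rpow_natCast, sub_eq_add_neg (-c * t),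
    exp_add]
  calc t ^ (β - 1) * (exp (-c * t) * exp (-(d / t)))
      ≤ t ^ (β - 1) * (exp (-c * t) * (n ! / d ^ n * t ^ n)) := by
        gcongr; exact exp_neg_div_le_mul_pow hd ht n
    _ = n ! / d ^ n * (t ^ (β - 1) * t ^ n * exp (-c * t)) := by ring

theorem exp_neg_mul_sub_div_le {a b s t : ℝ} (ha : 0 ≤ a) (hb : 0 ≤ b) (hs : 1 ≤ s) (ht : 0 < t) :
    exp (-a * t - b * s ^ 2 / t) ≤
      exp (-(a / 2) * t - b / 2 / t) * exp (-(1 / 2) * √(a * b) * s) := by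
  rw [← exp_add, exp_le_exp]
  have hamgm : √(a * b) * s ≤ a / 2 * t + b / 2 * s ^ 2 / t := by
    rw [show a / 2 * t + b / 2 * s ^ 2 / t = (a * t ^ 2 + b * s ^ 2) / (2 * t) by field_simp,
      le_div_iff₀ (by positivity), sqrt_mul ha]
    nlinarith [sq_nonneg (√a * t - √b * s), sq_sqrt ha, sq_sqrt hb]
  have hs2 : b / 2 / t ≤ b / 2 * s ^ 2 / t := by
    gcongr; exact le_mul_of_one_le_right (by positivity) (one_le_pow₀ hs)
  have hsplit : b * s ^ 2 / t = b / 2 * s ^ 2 / t + b / 2 * s ^ 2 / t := by ring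
  have hnonneg : 0 ≤ √(a * b) * s := by positivity
  linarith

/-- Let `a, b > 0` and `β ∈ ℝ`. Then there exists `C > 0`
(depending only on `a, b, β`) such that for every `s ≥ 1`,
`∫₀^∞ t^{β−1} e^{−a t − b s²/t} dt ≤ C · e^{−(1/2)√(ab)·s}`. -/
theorem stmt_9 (a b β : ℝ) (ha : 0 < a) (hb : 0 < b) :
    ∃ C : ℝ, 0 < C ∧ ∀ s : ℝ, 1 ≤ s →
      (∫ t in Set.Ioi (0 : ℝ),
          t ^ (β - 1) * Real.exp (-a * t - b * s ^ 2 / t)) ≤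
        C * Real.exp (-(1 / 2) * Real.sqrt (a * b) * s) := by
  set g : ℝ → ℝ := fun t => t ^ (β - 1) * exp (-(a / 2) * t - b / 2 / t)
  have hg : IntegrableOn g (Ioi 0) :=
    integrableOn_rpow_mul_exp_neg_mul_sub_div β (half_pos ha) (half_pos hb)
  have hg_nonneg : 0 ≤ ∫ t in Ioi 0, g t :=
    setIntegral_nonneg measurableSet_Ioi fun t (ht : 0 < t) => by positivity
  refine ⟨(∫ t in Ioi 0, g t) + 1, by positivity, fun s hs => ?_⟩
  set E := exp (-(1 / 2) * √(a * b) * s)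
  calc (∫ t in Ioi 0, t ^ (β - 1) * exp (-a * t - b * s ^ 2 / t))
      ≤ ∫ t in Ioi 0, g t * E := by
        refine integral_mono_of_nonneg ?_ (hg.mul_const E) ?_ <;>
          filter_upwards [ae_restrict_mem measurableSet_Ioi] with t (ht : 0 < t)
        · positivity
        · rw [mul_assoc]
          gcongr
          exact exp_neg_mul_sub_div_le ha.le hb.le hs ht
    _ = (∫ t in Ioi 0, g t) * E := integral_mul_const E g
    _ ≤ ((∫ t in Ioi 0, g t) + 1) * E := by gcongr; linarith
end

section
/- Let G = ℝ × (0,∞) be the 'ax+b' group, let γ < 1, p ∈ (1,∞), and ν ∈ ((1−γ)/(2p), (1−γ)/p). Let ψ ∈ C_c^∞((0,1)) with ψ ≥ 0 and ψ = 1 on [1/4, 3/4], and let φ ∈ C_c^∞((−1,1)) with φ ≥ 0 and φ = 1 on [0, 1/2]. Define g_ν(x,a) = ψ(x/a) φ(a) a^{−ν}. Then: (i) for every finite word W in the operators X₀ = a∂_a and X₁ = a∂_x (in any order, including the empty word), the function W g_ν belongs to L^p(μ_{δ^γ}), i.e. ∫∫ |W g_ν(x,a)|^p a^{−γ−1} dx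 da < ∞; (ii) g_ν² does not belong to L^p(μ_{δ^γ}), i.e. ∫∫ |g_ν(x,a)|^{2p} a^{−γ−1} dx da = ∞. -/
open MeasureTheory ENNReal

/-- The left-invariant vector field `X₀ = a ∂_a` of the `ax+b` group
`G = ℝ × (0,∞)`, acting on functions of `(x,a)`. -/
noncomputable def X0 (f : ℝ × ℝ → ℝ) : ℝ × ℝ → ℝ :=
  fun q => q.2 * deriv (fun a => f (q.1, a)) q.2

/-- The left-invariant vector field `X₁ = a ∂_x` of the `ax+b` group
`G = ℝ × (0,∞)`, acting on functions of `(x,a)`. -/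
noncomputable def X1 (f : ℝ × ℝ → ℝ) : ℝ × ℝ → ℝ :=
  fun q => q.2 * deriv (fun x => f (x, q.2)) q.1

/-- A finite word `W = X_{j₁} ⋯ X_{j_m}` in the operators `X₀, X₁` (the empty
word being the identity). -/
noncomputable def axbWord : (m : ℕ) → (Fin m → Fin 2) → (ℝ × ℝ → ℝ) → (ℝ × ℝ → ℝ)
  | 0, _, f => f
  | m + 1, J, f => (if J 0 = 0 then X0 else X1) (axbWord m (fun i => J i.succ) f)

/-! ### Auxiliary machinery -/

/-- elementary term `h(x/a) χ(a) a^(-ν)` -/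
noncomputable def elemTerm (ν : ℝ) (pc : (ℝ → ℝ) × (ℝ → ℝ)) (q : ℝ × ℝ) : ℝ :=
  pc.1 (q.1 / q.2) * pc.2 q.2 * q.2 ^ (-ν)

def GoodPair (pc : (ℝ → ℝ) × (ℝ → ℝ)) : Prop :=
  ContDiff ℝ ((⊤ : ℕ∞) : WithTop ℕ∞) pc.1 ∧ HasCompactSupport pc.1 ∧
    tsupport pc.1 ⊆ Set.Ioo 0 1 ∧
  ContDiff ℝ ((⊤ : ℕ∞) : WithTop ℕ∞) pc.2 ∧ HasCompactSupport pc.2 ∧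
    tsupport pc.2 ⊆ Set.Ioo (-1) 1

def AxbRep (ν : ℝ) (f : ℝ × ℝ → ℝ) : Prop :=
  ∃ L : List ((ℝ → ℝ) × (ℝ → ℝ)), (∀ pc ∈ L, GoodPair pc) ∧
    ∀ x a : ℝ, 0 < a → f (x, a) = (L.map (fun pc => elemTerm ν pc (x, a))).sum

noncomputable def pA (pc : (ℝ → ℝ) × (ℝ → ℝ)) : (ℝ → ℝ) × (ℝ → ℝ) :=
  (fun t => -(t * deriv pc.1 t), pc.2)

noncomputable def pB (pc : (ℝ → ℝ) × (ℝ → ℝ)) : (ℝ → ℝ) × (ℝ → ℝ) :=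
  (pc.1, fun b => b * deriv pc.2 b)

noncomputable def pC (ν : ℝ) (pc : (ℝ → ℝ) × (ℝ → ℝ)) : (ℝ → ℝ) × (ℝ → ℝ) :=
  (pc.1, fun b => -ν * pc.2 b)

noncomputable def pD (pc : (ℝ → ℝ) × (ℝ → ℝ)) : (ℝ → ℝ) × (ℝ → ℝ) :=
  (deriv pc.1, pc.2)

noncomputable def D0val (ν : ℝ) (pc : (ℝ → ℝ) × (ℝ → ℝ)) (x a : ℝ) : ℝ :=
  (deriv pc.1 (x / a) * (x * -(a ^ 2)⁻¹) * pc.2 a + pc.1 (x / a) * deriv pc.2 a) * a ^ (-ν)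
    + pc.1 (x / a) * pc.2 a * (-ν * a ^ (-ν - 1))

private lemma tsupport_mono' {f g : ℝ → ℝ} (h : Function.support f ⊆ tsupport g) :
    tsupport f ⊆ tsupport g :=
  closure_minimal h (isClosed_tsupport g)

private lemma good_pA {pc} (h : GoodPair pc) : GoodPair (pA pc) := by
  obtain ⟨h1, h2, h3, h4, h5, h6⟩ := h
  have hd : ContDiff ℝ ((⊤ : ℕ∞) : WithTop ℕ∞) (deriv pc.1) :=
    (contDiff_infty_iff_deriv.1 h1).2
  have hsupp : Function.support (fun t : ℝ => -(t * deriv pc.1 t)) ⊆ tsupport pc.1 := by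
    intro t ht
    apply support_deriv_subset
    simp only [Function.mem_support] at ht ⊢
    intro h0
    exact ht (by simp [h0])
  exact ⟨(contDiff_id.mul hd).neg, h2.mono' hsupp, (tsupport_mono' hsupp).trans h3, h4, h5, h6⟩

private lemma good_pB {pc} (h : GoodPair pc) : GoodPair (pB pc) := by
  obtain ⟨h1, h2, h3, h4, h5, h6⟩ := h
  have hd : ContDiff ℝ ((⊤ : ℕ∞) : WithTop ℕ∞) (deriv pc.2) :=
    (contDiff_infty_iff_deriv.1 h4).2
  have hsupp : Function.support (fun b : ℝ => b * deriv pc.2 b) ⊆ tsupport pc.2 := by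
    intro t ht
    apply support_deriv_subset
    simp only [Function.mem_support] at ht ⊢
    intro h0
    exact ht (by simp [h0])
  exact ⟨h1, h2, h3, contDiff_id.mul hd, h5.mono' hsupp, (tsupport_mono' hsupp).trans h6⟩

private lemma good_pC {ν : ℝ} {pc} (h : GoodPair pc) : GoodPair (pC ν pc) := by
  obtain ⟨h1, h2, h3, h4, h5, h6⟩ := h
  have hsupp : Function.support (fun b : ℝ => -ν * pc.2 b) ⊆ tsupport pc.2 := by
    intro t ht
    apply subset_tsupport
    simp only [Function.mem_support] at ht ⊢
    intro h0
    exact ht (by simp [h0])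
  exact ⟨h1, h2, h3, contDiff_const.mul h4, h5.mono' hsupp, (tsupport_mono' hsupp).trans h6⟩

private lemma good_pD {pc} (h : GoodPair pc) : GoodPair (pD pc) := by
  obtain ⟨h1, h2, h3, h4, h5, h6⟩ := h
  exact ⟨(contDiff_infty_iff_deriv.1 h1).2, h2.deriv,
    (tsupport_mono' support_deriv_subset).trans h3, h4, h5, h6⟩

private lemma hasDerivAt_elem_a {ν : ℝ} {pc : (ℝ → ℝ) × (ℝ → ℝ)}
    (h1 : ContDiff ℝ ((⊤ : ℕ∞) : WithTop ℕ∞) pc.1)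
    (h4 : ContDiff ℝ ((⊤ : ℕ∞) : WithTop ℕ∞) pc.2) (x a : ℝ) (ha : 0 < a) :
    HasDerivAt (fun b => elemTerm ν pc (x, b)) (D0val ν pc x a) a := by
  have hinv : HasDerivAt (fun b : ℝ => x / b) (x * -(a ^ 2)⁻¹) a := by
    simpa [div_eq_mul_inv] using (hasDerivAt_inv ha.ne').const_mul x
  have hh : HasDerivAt pc.1 (deriv pc.1 (x / a)) (x / a) :=
    ((h1.differentiable (by simp)) _).hasDerivAt
  have hc : HasDerivAt pc.2 (deriv pc.2 a) a :=
    ((h4.differentiable (by simp)) _).hasDerivAt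
  have hr : HasDerivAt (fun b : ℝ => b ^ (-ν)) (-ν * a ^ (-ν - 1)) a :=
    Real.hasDerivAt_rpow_const (Or.inl ha.ne')
  have := ((hh.comp a hinv).mul hc).mul hr
  exact this

private lemma hasDerivAt_elem_x {ν : ℝ} {pc : (ℝ → ℝ) × (ℝ → ℝ)}
    (h1 : ContDiff ℝ ((⊤ : ℕ∞) : WithTop ℕ∞) pc.1) (x a : ℝ) :
    HasDerivAt (fun y => elemTerm ν pc (y, a))
      (deriv pc.1 (x / a) * (1 / a) * pc.2 a * a ^ (-ν)) x := by
  have hdiv : HasDerivAt (fun y : ℝ => y / a) (1 / a) x := (hasDerivAt_id x).div_const a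
  have hh : HasDerivAt pc.1 (deriv pc.1 (x / a)) (x / a) :=
    ((h1.differentiable (by simp)) _).hasDerivAt
  have := ((hh.comp x hdiv).mul_const (pc.2 a)).mul_const (a ^ (-ν))
  simpa [elemTerm, Function.comp] using this

private lemma mul_D0val {ν : ℝ} (pc : (ℝ → ℝ) × (ℝ → ℝ)) (x a : ℝ) (ha : 0 < a) :
    a * D0val ν pc x a
      = elemTerm ν (pA pc) (x, a) + elemTerm ν (pB pc) (x, a) + elemTerm ν (pC ν pc) (x, a) := by
  have hne : a ≠ 0 := ha.ne'
  have h1 : a ^ (-ν - 1) = a ^ (-ν) / a := by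
    rw [eq_div_iff hne, ← Real.rpow_add_one hne (-ν - 1)]
    ring_nf
  simp only [D0val, elemTerm, pA, pB, pC, h1]
  field_simp

private lemma mul_D1val {ν : ℝ} (pc : (ℝ → ℝ) × (ℝ → ℝ)) (x a : ℝ) (ha : 0 < a) :
    a * (deriv pc.1 (x / a) * (1 / a) * pc.2 a * a ^ (-ν)) = elemTerm ν (pD pc) (x, a) := by
  have hne : a ≠ 0 := ha.ne'
  simp only [elemTerm, pD]
  field_simp

private lemma list_hasDerivAt {α : Type*} (L : List α) (F : α → ℝ → ℝ) (D : α → ℝ) (x : ℝ)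
    (h : ∀ c ∈ L, HasDerivAt (F c) (D c) x) :
    HasDerivAt (fun y => (L.map (fun c => F c y)).sum) ((L.map D).sum) x := by
  induction L with
  | nil => simpa using hasDerivAt_const x (0 : ℝ)
  | cons c L ih =>
    simp only [List.map_cons, List.sum_cons]
    exact (h c List.mem_cons_self).add (ih fun c hc => h c (List.mem_cons_of_mem _ hc))

private lemma list_mul_sum {α : Type*} (L : List α) (f : α → ℝ) (r : ℝ) :
    r * (L.map f).sum = (L.map (fun c => r * f c)).sum := by
  induction L with
  | nil => simp
  | cons c L ih => simp only [List.map_cons, List.sum_cons, mul_add, ih]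

private lemma list_sum_add3 {α : Type*} (L : List α) (f g h : α → ℝ) :
    (L.map (fun c => f c + g c + h c)).sum
      = (L.map f).sum + (L.map g).sum + (L.map h).sum := by
  induction L with
  | nil => simp
  | cons c L ih => simp only [List.map_cons, List.sum_cons, ih]; ring

private lemma AxbRep.x0 {ν : ℝ} {f} (hf : AxbRep ν f) : AxbRep ν (X0 f) := by
  obtain ⟨L, hL, heq⟩ := hf
  refine ⟨L.map pA ++ L.map pB ++ L.map (pC ν), ?_, ?_⟩
  · intro pc' h'
    rcases List.mem_append.1 h' with h' | h'
    · rcases List.mem_append.1 h' with h' | h'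
      · obtain ⟨pc, hpc, rfl⟩ := List.mem_map.1 h'
        exact good_pA (hL pc hpc)
      · obtain ⟨pc, hpc, rfl⟩ := List.mem_map.1 h'
        exact good_pB (hL pc hpc)
    · obtain ⟨pc, hpc, rfl⟩ := List.mem_map.1 h'
      exact good_pC (hL pc hpc)
  · intro x a ha
    have hEq : (fun b => f (x, b)) =ᶠ[nhds a]
        (fun b => (L.map (fun pc => elemTerm ν pc (x, b))).sum) := by
      filter_upwards [isOpen_Ioi.mem_nhds ha] with b hb using heq x b hb
    have hder : HasDerivAt (fun b => (L.map (fun pc => elemTerm ν pc (x, b))).sum)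
        ((L.map (fun pc => D0val ν pc x a)).sum) a :=
      list_hasDerivAt L _ _ a fun pc hpc =>
        hasDerivAt_elem_a (hL pc hpc).1 (hL pc hpc).2.2.2.1 x a ha
    show a * deriv (fun b => f (x, b)) a = _
    rw [hEq.deriv_eq, hder.deriv, list_mul_sum]
    have : (fun pc => a * D0val ν pc x a)
        = fun pc => elemTerm ν (pA pc) (x, a) + elemTerm ν (pB pc) (x, a)
            + elemTerm ν (pC ν pc) (x, a) := funext fun pc => mul_D0val pc x a ha
    rw [this, list_sum_add3, List.map_append, List.map_append, List.sum_append,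
      List.sum_append, List.map_map, List.map_map, List.map_map]
    rfl

private lemma AxbRep.x1 {ν : ℝ} {f} (hf : AxbRep ν f) : AxbRep ν (X1 f) := by
  obtain ⟨L, hL, heq⟩ := hf
  refine ⟨L.map pD, ?_, ?_⟩
  · intro pc' h'
    obtain ⟨pc, hpc, rfl⟩ := List.mem_map.1 h'
    exact good_pD (hL pc hpc)
  · intro x a ha
    have hEq : (fun y => f (y, a)) = (fun y => (L.map (fun pc => elemTerm ν pc (y, a))).sum) :=
      funext fun y => heq y a ha
    have hder : HasDerivAt (fun y => (L.map (fun pc => elemTerm ν pc (y, a))).sum)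
        ((L.map (fun pc => deriv pc.1 (x / a) * (1 / a) * pc.2 a * a ^ (-ν))).sum) x :=
      list_hasDerivAt L _ _ x fun pc hpc => hasDerivAt_elem_x (hL pc hpc).1 x a
    show a * deriv (fun y => f (y, a)) x = _
    rw [hEq, hder.deriv, list_mul_sum]
    have : (fun pc => a * (deriv pc.1 (x / a) * (1 / a) * pc.2 a * a ^ (-ν)))
        = fun pc => elemTerm ν (pD pc) (x, a) := funext fun pc => mul_D1val pc x a ha
    rw [this, List.map_map]
    rfl

private lemma axbRep_word {ν : ℝ} {f} (hf : AxbRep ν f) :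
    ∀ (m : ℕ) (J : Fin m → Fin 2), AxbRep ν (axbWord m J f) := by
  intro m
  induction m with
  | zero => intro J; exact hf
  | succ m ih =>
    intro J
    show AxbRep ν ((if J 0 = 0 then X0 else X1) (axbWord m (fun i => J i.succ) f))
    split
    · exact (ih _).x0
    · exact (ih _).x1

private lemma list_bound (ν : ℝ) (L : List ((ℝ → ℝ) × (ℝ → ℝ))) :
    (∀ pc ∈ L, GoodPair pc) →
    ∃ C : ℝ, 0 ≤ C ∧ ∀ x a : ℝ, 0 < a →
      |(L.map (fun pc => elemTerm ν pc (x, a))).sum|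
        ≤ if 0 < x ∧ x < a ∧ a < 1 then C * a ^ (-ν) else 0 := by
  induction L with
  | nil =>
    intro _
    refine ⟨0, le_refl 0, fun x a ha => ?_⟩
    simp only [List.map_nil, List.sum_nil, abs_zero]
    split <;> simp
  | cons pc L ih =>
    intro hL
    obtain ⟨C, hC0, hC⟩ := ih fun q hq => hL q (List.mem_cons_of_mem _ hq)
    obtain ⟨hsm1, hcs1, hsupp1, hsm2, hcs2, hsupp2⟩ := hL pc List.mem_cons_self
    obtain ⟨M1, hM1⟩ := hcs1.exists_bound_of_continuous hsm1.continuous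
    obtain ⟨M2, hM2⟩ := hcs2.exists_bound_of_continuous hsm2.continuous
    refine ⟨|M1| * |M2| + C, by positivity, fun x a ha => ?_⟩
    simp only [List.map_cons, List.sum_cons]
    have htail := hC x a ha
    by_cases hreg : 0 < x ∧ x < a ∧ a < 1
    · rw [if_pos hreg] at htail ⊢
      have hrpos : (0 : ℝ) < a ^ (-ν) := Real.rpow_pos_of_pos ha _
      have hterm : |elemTerm ν pc (x, a)| ≤ |M1| * |M2| * a ^ (-ν) := by
        rw [elemTerm, abs_mul, abs_mul, abs_of_pos hrpos]
        have e1 : |pc.1 (x / a)| ≤ |M1| :=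
          le_trans (by simpa [Real.norm_eq_abs] using hM1 (x / a)) (le_abs_self M1)
        have e2 : |pc.2 a| ≤ |M2| :=
          le_trans (by simpa [Real.norm_eq_abs] using hM2 a) (le_abs_self M2)
        have := mul_le_mul e1 e2 (abs_nonneg _) (abs_nonneg _)
        exact mul_le_mul_of_nonneg_right this hrpos.le
      calc |elemTerm ν pc (x, a) + (L.map (fun pc => elemTerm ν pc (x, a))).sum|
          ≤ |elemTerm ν pc (x, a)| + |(L.map (fun pc => elemTerm ν pc (x, a))).sum| :=
            abs_add_le _ _
        _ ≤ |M1| * |M2| * a ^ (-ν) + C * a ^ (-ν) := add_le_add hterm htail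
        _ = (|M1| * |M2| + C) * a ^ (-ν) := by ring
    · rw [if_neg hreg] at htail ⊢
      have hzero : elemTerm ν pc (x, a) = 0 := by
        by_cases h1 : a < 1
        · have hx : x / a ∉ Set.Ioo (0 : ℝ) 1 := by
            intro hmem
            apply hreg
            refine ⟨?_, ?_, h1⟩
            · rcases div_pos_iff.1 hmem.1 with h | h
              · exact h.1
              · exact absurd ha (not_lt.2 h.2.le)
            · exact (div_lt_one ha).1 hmem.2
          have : pc.1 (x / a) = 0 :=
            image_eq_zero_of_notMem_tsupport fun hmem => hx (hsupp1 hmem)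
          simp [elemTerm, this]
        · have hx : a ∉ Set.Ioo (-1 : ℝ) 1 := fun hmem => h1 hmem.2
          have : pc.2 a = 0 :=
            image_eq_zero_of_notMem_tsupport fun hmem => hx (hsupp2 hmem)
          simp [elemTerm, this]
      rw [hzero, zero_add]
      exact htail

private lemma axbRep_bound {ν : ℝ} {f} (hf : AxbRep ν f) :
    ∃ C : ℝ, 0 ≤ C ∧ ∀ x a : ℝ, 0 < a →
      |f (x, a)| ≤ if 0 < x ∧ x < a ∧ a < 1 then C * a ^ (-ν) else 0 := by
  obtain ⟨L, hL, heq⟩ := hf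
  obtain ⟨C, hC0, hC⟩ := list_bound ν L hL
  exact ⟨C, hC0, fun x a ha => by rw [heq x a ha]; exact hC x a ha⟩

private lemma lintegral_prod_aux (c : ℝ → ℝ≥0∞) (hc : Measurable c)
    (l r : ℝ → ℝ) (hl : Measurable l) (hr : Measurable r) :
    (∫⁻ q in Set.univ ×ˢ Set.Ioi (0 : ℝ),
        Set.indicator {q : ℝ × ℝ | l q.2 < q.1 ∧ q.1 < r q.2} (fun _ => 1) q * c q.2)
      = ∫⁻ a in Set.Ioi (0 : ℝ), ENNReal.ofReal (r a - l a) * c a := by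
  have hS : MeasurableSet {q : ℝ × ℝ | l q.2 < q.1 ∧ q.1 < r q.2} :=
    (measurableSet_lt (hl.comp measurable_snd) measurable_fst).inter
      (measurableSet_lt measurable_fst (hr.comp measurable_snd))
  have hmeas : Measurable fun q : ℝ × ℝ =>
      Set.indicator {q : ℝ × ℝ | l q.2 < q.1 ∧ q.1 < r q.2} (fun _ => (1 : ℝ≥0∞)) q * c q.2 :=
    (measurable_const.indicator hS).mul (hc.comp measurable_snd)
  rw [Measure.volume_eq_prod, ← Measure.prod_restrict, Measure.restrict_univ,
    lintegral_prod_symm _ hmeas.aemeasurable]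
  refine lintegral_congr fun a => ?_
  have hpt : ∀ x : ℝ,
      Set.indicator {q : ℝ × ℝ | l q.2 < q.1 ∧ q.1 < r q.2} (fun _ => (1 : ℝ≥0∞)) (x, a)
        = Set.indicator (Set.Ioo (l a) (r a)) (fun _ => (1 : ℝ≥0∞)) x := by
    intro x
    simp [Set.indicator_apply, Set.mem_Ioo]
  simp_rw [hpt]
  rw [lintegral_mul_const _ (measurable_const.indicator measurableSet_Ioo),
    lintegral_indicator measurableSet_Ioo, setLIntegral_one, Real.volume_Ioo]

private lemma fin_aux (K E : ℝ) (hK : 0 ≤ K) (hE : (-1 : ℝ) < E + 1) :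
    (∫⁻ a in Set.Ioi (0 : ℝ),
        ENNReal.ofReal (a - 0)
          * (Set.Ioo (0:ℝ) 1).indicator (fun b => ENNReal.ofReal (K * b ^ E)) a)
      < ⊤ := by
  have h1 : ∀ a : ℝ, ENNReal.ofReal (a - 0)
        * (Set.Ioo (0:ℝ) 1).indicator (fun b => ENNReal.ofReal (K * b ^ E)) a
      = (Set.Ioo (0:ℝ) 1).indicator
          (fun b => ENNReal.ofReal (b - 0) * ENNReal.ofReal (K * b ^ E)) a := by
    intro a
    rw [Set.indicator_apply, Set.indicator_apply]
    split <;> simp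
  simp_rw [h1]
  rw [lintegral_indicator measurableSet_Ioo, Measure.restrict_restrict measurableSet_Ioo,
    Set.inter_eq_self_of_subset_left Set.Ioo_subset_Ioi_self]
  have h2 : ∫⁻ a in Set.Ioo (0:ℝ) 1, ENNReal.ofReal (a - 0) * ENNReal.ofReal (K * a ^ E)
      = ∫⁻ a in Set.Ioo (0:ℝ) 1, ENNReal.ofReal (K * a ^ (E + 1)) := by
    refine setLIntegral_congr_fun measurableSet_Ioo (fun a ha => ?_)
    rw [sub_zero, ← ENNReal.ofReal_mul ha.1.le]
    congr 1
    rw [Real.rpow_add_one ha.1.ne']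
    ring
  rw [h2]
  have hint : IntegrableOn (fun a : ℝ => K * a ^ (E + 1)) (Set.Ioo (0:ℝ) 1) :=
    ((intervalIntegral.integrableOn_Ioo_rpow_iff one_pos).2 hE).const_mul K
  have hnn : 0 ≤ᵐ[volume.restrict (Set.Ioo (0:ℝ) 1)] fun a : ℝ => K * a ^ (E + 1) :=
    (ae_restrict_mem measurableSet_Ioo).mono fun a ha =>
      mul_nonneg hK (Real.rpow_nonneg ha.1.le _)
  have hm : AEStronglyMeasurable (fun a : ℝ => K * a ^ (E + 1))
      (volume.restrict (Set.Ioo (0:ℝ) 1)) :=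
    (continuousOn_const.mul
      (continuousOn_id.rpow_const fun x hx => Or.inl hx.1.ne')).aestronglyMeasurable
      measurableSet_Ioo
  exact lt_top_iff_ne_top.2 ((lintegral_ofReal_ne_top_iff_integrable hm hnn).2 hint)

private lemma div_aux (F : ℝ) (hF : F + 1 ≤ -1) :
    (∫⁻ a in Set.Ioi (0 : ℝ),
        ENNReal.ofReal (3 * a / 4 - a / 4)
          * (Set.Ioo (0:ℝ) (1/2)).indicator (fun b => ENNReal.ofReal (b ^ F)) a)
      = ⊤ := by
  have h1 : ∀ a : ℝ, ENNReal.ofReal (3 * a / 4 - a / 4)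
        * (Set.Ioo (0:ℝ) (1/2)).indicator (fun b => ENNReal.ofReal (b ^ F)) a
      = (Set.Ioo (0:ℝ) (1/2)).indicator
          (fun b => ENNReal.ofReal (3 * b / 4 - b / 4) * ENNReal.ofReal (b ^ F)) a := by
    intro a
    rw [Set.indicator_apply, Set.indicator_apply]
    split <;> simp
  simp_rw [h1]
  rw [lintegral_indicator measurableSet_Ioo, Measure.restrict_restrict measurableSet_Ioo,
    Set.inter_eq_self_of_subset_left Set.Ioo_subset_Ioi_self]
  have h2 : ∫⁻ a in Set.Ioo (0:ℝ) (1/2),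
        ENNReal.ofReal (3 * a / 4 - a / 4) * ENNReal.ofReal (a ^ F)
      = ∫⁻ a in Set.Ioo (0:ℝ) (1/2), ENNReal.ofReal ((1/2) * a ^ (F + 1)) := by
    refine setLIntegral_congr_fun measurableSet_Ioo (fun a ha => ?_)
    rw [← ENNReal.ofReal_mul (by linarith [ha.1] : (0:ℝ) ≤ 3 * a / 4 - a / 4)]
    congr 1
    rw [Real.rpow_add_one ha.1.ne']
    ring
  rw [h2]
  by_contra hfin
  have hnn : 0 ≤ᵐ[volume.restrict (Set.Ioo (0:ℝ) (1/2))] fun a : ℝ => (1/2) * a ^ (F + 1) :=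
    (ae_restrict_mem measurableSet_Ioo).mono fun a ha =>
      mul_nonneg (by norm_num) (Real.rpow_nonneg ha.1.le _)
  have hm : AEStronglyMeasurable (fun a : ℝ => (1/2 : ℝ) * a ^ (F + 1))
      (volume.restrict (Set.Ioo (0:ℝ) (1/2))) :=
    (continuousOn_const.mul
      (continuousOn_id.rpow_const fun x hx => Or.inl hx.1.ne')).aestronglyMeasurable
      measurableSet_Ioo
  have hint := (lintegral_ofReal_ne_top_iff_integrable hm hnn).1 hfin
  have hint2 : IntegrableOn (fun a : ℝ => a ^ (F + 1)) (Set.Ioo (0:ℝ) (1/2)) := by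
    have h3 := hint.const_mul 2
    have h4 : (fun a : ℝ => 2 * (1/2 * a ^ (F + 1))) = fun a : ℝ => a ^ (F + 1) := by
      funext a; ring
    rwa [h4] at h3
  rw [intervalIntegral.integrableOn_Ioo_rpow_iff one_half_pos] at hint2
  linarith

/-- On the `ax+b` group `G = ℝ × (0,∞)` (right Haar measure
`a⁻¹ dx da`, modular function `δ(x,a) = a⁻¹`, `dμ_{δ^γ} = a^{−γ−1} dx da`), let
`γ < 1`, `p ∈ (1,∞)`, `ν ∈ ((1−γ)/(2p), (1−γ)/p)`, and let `ψ ∈ C_c^∞((0,1))`,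
`ψ ≥ 0`, `ψ = 1` on `[1/4,3/4]`, `φ ∈ C_c^∞((−1,1))`, `φ ≥ 0`, `φ = 1` on `[0,1/2]`,
and `g_ν(x,a) = ψ(x/a) φ(a) a^{−ν}`. Then (i) every finite word `W` in
`X₀ = a∂_a, X₁ = a∂_x` applied to `g_ν` lies in `L^p(μ_{δ^γ})`, and
(ii) `g_ν² ∉ L^p(μ_{δ^γ})`. -/
theorem stmt_13 (γ p ν : ℝ) (hγ : γ < 1) (hp : 1 < p)
    (hν₁ : (1 - γ) / (2 * p) < ν) (hν₂ : ν < (1 - γ) / p)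
    (ψ φ : ℝ → ℝ)
    (hψsm : ContDiff ℝ (⊤ : ℕ∞) ψ) (hψcs : HasCompactSupport ψ)
    (hψsupp : tsupport ψ ⊆ Set.Ioo 0 1)
    (hψnn : ∀ t, 0 ≤ ψ t) (hψone : ∀ t ∈ Set.Icc (1/4 : ℝ) (3/4), ψ t = 1)
    (hφsm : ContDiff ℝ (⊤ : ℕ∞) φ) (hφcs : HasCompactSupport φ)
    (hφsupp : tsupport φ ⊆ Set.Ioo (-1) 1)
    (hφnn : ∀ t, 0 ≤ φ t) (hφone : ∀ t ∈ Set.Icc (0 : ℝ) (1/2), φ t = 1) :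
    (∀ (m : ℕ) (J : Fin m → Fin 2),
      (∫⁻ q in Set.univ ×ˢ Set.Ioi (0 : ℝ),
        ENNReal.ofReal
          (|axbWord m J (fun q => ψ (q.1 / q.2) * φ q.2 * q.2 ^ (-ν)) q| ^ p
            * q.2 ^ (-γ - 1))) < ⊤) ∧
    (∫⁻ q in Set.univ ×ˢ Set.Ioi (0 : ℝ),
        ENNReal.ofReal
          (|ψ (q.1 / q.2) * φ q.2 * q.2 ^ (-ν)| ^ (2 * p) * q.2 ^ (-γ - 1))) = ⊤ := by
  have hp0 : (0:ℝ) < p := lt_trans one_pos hp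
  have hgrep : AxbRep ν (fun q : ℝ × ℝ => ψ (q.1 / q.2) * φ q.2 * q.2 ^ (-ν)) := by
    refine ⟨[(ψ, φ)], ?_, ?_⟩
    · intro pc hpc
      rw [List.mem_singleton] at hpc
      subst hpc
      exact ⟨hψsm.of_le (by simp), hψcs, hψsupp, hφsm.of_le (by simp), hφcs, hφsupp⟩
    · intro x a ha
      simp [elemTerm]
  constructor
  · intro m J
    obtain ⟨C, hC0, hC⟩ := axbRep_bound (axbRep_word hgrep m J)
    have hKnn : 0 ≤ C ^ p := Real.rpow_nonneg hC0 p
    have hcm : Measurable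
        ((Set.Ioo (0:ℝ) 1).indicator
          (fun b => ENNReal.ofReal (C ^ p * b ^ ((-ν) * p + (-γ - 1))))) :=
      (((measurable_id.pow measurable_const).const_mul (C ^ p)).ennreal_ofReal).indicator
        measurableSet_Ioo
    have key := lintegral_prod_aux
      ((Set.Ioo (0:ℝ) 1).indicator
        (fun b => ENNReal.ofReal (C ^ p * b ^ ((-ν) * p + (-γ - 1))))) hcm
      (fun _ => (0:ℝ)) (fun a => a) measurable_const measurable_id
    refine lt_of_le_of_lt (le_trans (lintegral_mono_ae ?_) (le_of_eq key)) ?_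
    · refine (ae_restrict_mem (MeasurableSet.univ.prod measurableSet_Ioi)).mono ?_
      rintro ⟨x, a⟩ hq
      have ha : (0:ℝ) < a := hq.2
      dsimp only
      by_cases hreg : 0 < x ∧ x < a ∧ a < 1
      · have h1 : |axbWord m J (fun q => ψ (q.1 / q.2) * φ q.2 * q.2 ^ (-ν)) (x, a)|
            ≤ C * a ^ (-ν) := by
          have := hC x a ha; rwa [if_pos hreg] at this
        have h2 : |axbWord m J (fun q => ψ (q.1 / q.2) * φ q.2 * q.2 ^ (-ν)) (x, a)| ^ p
              * a ^ (-γ - 1)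
            ≤ C ^ p * a ^ ((-ν) * p + (-γ - 1)) := by
          have hb : |axbWord m J (fun q => ψ (q.1 / q.2) * φ q.2 * q.2 ^ (-ν)) (x, a)| ^ p
              ≤ (C * a ^ (-ν)) ^ p :=
            Real.rpow_le_rpow (abs_nonneg _) h1 hp0.le
          have hc2 : (C * a ^ (-ν)) ^ p = C ^ p * a ^ ((-ν) * p) := by
            rw [Real.mul_rpow hC0 (Real.rpow_nonneg ha.le _), ← Real.rpow_mul ha.le]
          calc |axbWord m J (fun q => ψ (q.1 / q.2) * φ q.2 * q.2 ^ (-ν)) (x, a)| ^ p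
                * a ^ (-γ - 1)
              ≤ (C * a ^ (-ν)) ^ p * a ^ (-γ - 1) :=
                mul_le_mul_of_nonneg_right hb (Real.rpow_nonneg ha.le _)
            _ = C ^ p * (a ^ ((-ν) * p) * a ^ (-γ - 1)) := by rw [hc2]; ring
            _ = C ^ p * a ^ ((-ν) * p + (-γ - 1)) := by rw [← Real.rpow_add ha]
        refine le_trans (ENNReal.ofReal_le_ofReal h2) (le_of_eq ?_)
        rw [Set.indicator_of_mem
            (show ((x, a) : ℝ × ℝ) ∈ {q : ℝ × ℝ | 0 < q.1 ∧ q.1 < q.2} from ⟨hreg.1, hreg.2.1⟩),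
          Set.indicator_of_mem (Set.mem_Ioo.2 ⟨ha, hreg.2.2⟩), one_mul]
      · have h1 : |axbWord m J (fun q => ψ (q.1 / q.2) * φ q.2 * q.2 ^ (-ν)) (x, a)| ≤ 0 := by
          have := hC x a ha; rwa [if_neg hreg] at this
        have h0 : axbWord m J (fun q => ψ (q.1 / q.2) * φ q.2 * q.2 ^ (-ν)) (x, a) = 0 :=
          abs_eq_zero.1 (le_antisymm h1 (abs_nonneg _))
        rw [h0]
        simp [Real.zero_rpow (ne_of_gt hp0)]
    · exact fin_aux (C ^ p) ((-ν) * p + (-γ - 1)) hKnn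
        (by nlinarith [(lt_div_iff₀ hp0).1 hν₂])
  · have hcm : Measurable
        ((Set.Ioo (0:ℝ) (1/2)).indicator
          (fun b => ENNReal.ofReal (b ^ ((-ν) * (2 * p) + (-γ - 1))))) :=
      ((measurable_id.pow measurable_const).ennreal_ofReal).indicator measurableSet_Ioo
    have key := lintegral_prod_aux
      ((Set.Ioo (0:ℝ) (1/2)).indicator
        (fun b => ENNReal.ofReal (b ^ ((-ν) * (2 * p) + (-γ - 1))))) hcm
      (fun a => a / 4) (fun a => 3 * a / 4)
      (measurable_id.div_const 4) ((measurable_id.const_mul 3).div_const 4)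
    have hdiv : (∫⁻ a in Set.Ioi (0 : ℝ),
        ENNReal.ofReal (3 * a / 4 - a / 4)
          * (Set.Ioo (0:ℝ) (1/2)).indicator
              (fun b => ENNReal.ofReal (b ^ ((-ν) * (2 * p) + (-γ - 1)))) a) = ⊤ :=
      div_aux _ (by nlinarith [(div_lt_iff₀ (by positivity : (0:ℝ) < 2 * p)).1 hν₁])
    rw [eq_top_iff]
    refine le_trans (le_of_eq (key.trans hdiv).symm) (lintegral_mono_ae ?_)
    refine (ae_restrict_mem (MeasurableSet.univ.prod measurableSet_Ioi)).mono ?_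
    rintro ⟨x, a⟩ hq
    have ha : (0:ℝ) < a := hq.2
    dsimp only
    by_cases hx : a / 4 < x ∧ x < 3 * a / 4
    · by_cases ha2 : a ∈ Set.Ioo (0:ℝ) (1/2)
      · rw [Set.indicator_of_mem
            (show ((x, a) : ℝ × ℝ) ∈ {q : ℝ × ℝ | q.2 / 4 < q.1 ∧ q.1 < 3 * q.2 / 4} from hx),
          Set.indicator_of_mem ha2, one_mul]
        have hψ1 : ψ (x / a) = 1 := hψone _
          ⟨by rw [le_div_iff₀ ha]; linarith [hx.1], by rw [div_le_iff₀ ha]; linarith [hx.2]⟩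
        have hφ1 : φ a = 1 := hφone a ⟨ha.le, ha2.2.le⟩
        refine le_of_eq ?_
        rw [hψ1, hφ1, one_mul, one_mul, abs_of_pos (Real.rpow_pos_of_pos ha _)]
        congr 1
        rw [← Real.rpow_mul ha.le, ← Real.rpow_add ha]
      · rw [Set.indicator_of_notMem ha2, mul_zero]
        exact zero_le
    · rw [Set.indicator_of_notMem
          (show ((x, a) : ℝ × ℝ) ∉ {q : ℝ × ℝ | q.2 / 4 < q.1 ∧ q.1 < 3 * q.2 / 4} from hx),
        zero_mul]
      exact zero_le
end

section
/- Let G = ℝ × (0,∞) be the 'ax+b' group, let ν > 0 and η ∈ ℝ. Let ψ ∈ C_c^∞((0,1)) with ψ ≥ 0 and ψ = 1 on [1/4, 3/4], let φ ∈ C_c^∞((−1,1)) with φ ≥ 0 and φ = 1 on [0, 1/2], and set g_ν(x,a) = ψ(x/a) φ(a) a^{−ν}. Let R₊ = [0,1] × [1/2, 3/2], R₋ = [−1,0] × [1/2, 3/2], A = 1_{R₊} − 1_{R₋}, and for y ∈ (0,1) define A_y(x,a) = A(x/y, a/y) · y^{η−1}. Then there exist constants c, C > 0 and y₀ ∈ (0,1)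 such that for all 0 < y < y₀, c · y^{−ν} ≤ ∫∫ g_ν(x,a) A_y(x,a) a^{−η−1} dx da ≤ C · y^{−ν}; in particular the integral tends to +∞ as y → 0⁺. -/
open MeasureTheory Filter

/-- The function `A = 1_{R₊} − 1_{R₋}` on the `ax+b` group `G = ℝ × (0,∞)`, where
`R₊ = [0,1] × [1/2,3/2]` and `R₋ = [−1,0] × [1/2,3/2]`. -/
noncomputable def Afun : ℝ × ℝ → ℝ := fun q =>
  (Set.Icc (0 : ℝ) 1 ×ˢ Set.Icc (1/2 : ℝ) (3/2)).indicator (fun _ => (1 : ℝ)) q -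
    (Set.Icc (-1 : ℝ) 0 ×ˢ Set.Icc (1/2 : ℝ) (3/2)).indicator (fun _ => (1 : ℝ)) q

lemma Afun_measurable : Measurable Afun := by
  unfold Afun
  exact (measurable_const.indicator (measurableSet_Icc.prod measurableSet_Icc)).sub
    (measurable_const.indicator (measurableSet_Icc.prod measurableSet_Icc))

lemma Afun_eq_zero {q : ℝ × ℝ} (h : q.2 ∉ Set.Icc (1/2 : ℝ) (3/2)) : Afun q = 0 := by
  unfold Afun
  rw [Set.indicator_of_notMem (fun hq => h hq.2), Set.indicator_of_notMem (fun hq => h hq.2)]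
  ring

lemma Afun_eq_zero' {q : ℝ × ℝ} (h : q.1 ∉ Set.Icc (-1 : ℝ) 1) : Afun q = 0 := by
  unfold Afun
  rw [Set.indicator_of_notMem (fun hq => h ⟨by linarith [hq.1.1], hq.1.2⟩),
    Set.indicator_of_notMem (fun hq => h ⟨hq.1.1, by linarith [hq.1.2]⟩)]
  ring

lemma Afun_abs_le (q : ℝ × ℝ) : |Afun q| ≤ 1 := by
  unfold Afun
  rcases Set.indicator_eq_zero_or_self (Set.Icc (0 : ℝ) 1 ×ˢ Set.Icc (1/2 : ℝ) (3/2))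
      (fun _ => (1:ℝ)) q with h1 | h1 <;>
    rcases Set.indicator_eq_zero_or_self (Set.Icc (-1 : ℝ) 0 ×ˢ Set.Icc (1/2 : ℝ) (3/2))
      (fun _ => (1:ℝ)) q with h2 | h2 <;>
  rw [h1, h2] <;> norm_num

set_option maxHeartbeats 1000000 in
/-- On the `ax+b` group `G = ℝ × (0,∞)`, let `ν > 0`, `η ∈ ℝ`,
let `ψ ∈ C_c^∞((0,1))`, `ψ ≥ 0`, `ψ = 1` on `[1/4,3/4]`, `φ ∈ C_c^∞((−1,1))`,
`φ ≥ 0`, `φ = 1` on `[0,1/2]`, and `g_ν(x,a) = ψ(x/a) φ(a) a^{−ν}`. With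
`A_y(x,a) = A(x/y, a/y)·y^{η−1}`, there exist `c, C > 0` and `y₀ ∈ (0,1)` such that
for all `0 < y < y₀`,
`c·y^{−ν} ≤ ∫∫ g_ν(x,a) A_y(x,a) a^{−η−1} dx da ≤ C·y^{−ν}`; in particular the
integral tends to `+∞` as `y → 0⁺`. -/
theorem stmt_15 (ν η : ℝ) (hν : 0 < ν)
    (ψ φ : ℝ → ℝ)
    (hψsm : ContDiff ℝ (⊤ : ℕ∞) ψ) (hψcs : HasCompactSupport ψ)
    (hψsupp : tsupport ψ ⊆ Set.Ioo 0 1)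
    (hψnn : ∀ t, 0 ≤ ψ t) (hψone : ∀ t ∈ Set.Icc (1/4 : ℝ) (3/4), ψ t = 1)
    (hφsm : ContDiff ℝ (⊤ : ℕ∞) φ) (hφcs : HasCompactSupport φ)
    (hφsupp : tsupport φ ⊆ Set.Ioo (-1) 1)
    (hφnn : ∀ t, 0 ≤ φ t) (hφone : ∀ t ∈ Set.Icc (0 : ℝ) (1/2), φ t = 1) :
    ∃ c C y₀ : ℝ, 0 < c ∧ 0 < C ∧ 0 < y₀ ∧ y₀ < 1 ∧
      (∀ y : ℝ, 0 < y → y < y₀ →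
        c * y ^ (-ν) ≤
          (∫ q in Set.univ ×ˢ Set.Ioi (0 : ℝ),
            (ψ (q.1 / q.2) * φ q.2 * q.2 ^ (-ν)) *
              (Afun (q.1 / y, q.2 / y) * y ^ (η - 1)) * q.2 ^ (-η - 1)) ∧
        (∫ q in Set.univ ×ˢ Set.Ioi (0 : ℝ),
            (ψ (q.1 / q.2) * φ q.2 * q.2 ^ (-ν)) *
              (Afun (q.1 / y, q.2 / y) * y ^ (η - 1)) * q.2 ^ (-η - 1)) ≤
          C * y ^ (-ν)) ∧
      Tendsto (fun y : ℝ =>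
          ∫ q in Set.univ ×ˢ Set.Ioi (0 : ℝ),
            (ψ (q.1 / q.2) * φ q.2 * q.2 ^ (-ν)) *
              (Afun (q.1 / y, q.2 / y) * y ^ (η - 1)) * q.2 ^ (-η - 1))
        (nhdsWithin 0 (Set.Ioi 0)) atTop := by
  have hψ0 : ∀ t : ℝ, t ≤ 0 → ψ t = 0 := by
    intro t ht
    apply image_eq_zero_of_notMem_tsupport
    intro hmem
    exact absurd (hψsupp hmem).1 (not_lt.2 ht)
  set S : Set (ℝ × ℝ) := Set.univ ×ˢ Set.Ioi (0 : ℝ) with hSdef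
  have hSm : MeasurableSet S := MeasurableSet.univ.prod measurableSet_Ioi
  set g : ℝ × ℝ → ℝ := fun q => ψ (q.1 / q.2) * q.2 ^ (-ν) * Afun q * q.2 ^ (-η - 1) with hgdef
  set K : ℝ := ∫ q in S, g q with hKdef
  -- measurability of g
  have hrpm : ∀ p : ℝ, Measurable (fun a : ℝ => a ^ p) := fun p => by measurability
  have hgm : Measurable g := by
    exact (((hψsm.continuous.measurable.comp (measurable_fst.div measurable_snd)).mul
      ((hrpm (-ν)).comp measurable_snd)).mul Afun_measurable).mul
      ((hrpm (-η - 1)).comp measurable_snd)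
  -- rpow bound on [1/2, 3/2]
  have hRB : ∀ p : ℝ, ∀ a : ℝ, a ∈ Set.Icc (1/2 : ℝ) (3/2) →
      a ^ p ≤ (1/2 : ℝ) ^ p + (3/2 : ℝ) ^ p := by
    intro p a ha
    rcases le_or_gt 0 p with hp | hp
    · have h1 : a ^ p ≤ (3/2 : ℝ) ^ p :=
        Real.rpow_le_rpow (by linarith [ha.1]) ha.2 hp
      have h2 : (0:ℝ) ≤ (1/2 : ℝ) ^ p := Real.rpow_nonneg (by norm_num) p
      linarith
    · have h1 : a ^ p ≤ (1/2 : ℝ) ^ p :=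
        Real.rpow_le_rpow_of_nonpos (by norm_num) ha.1 hp.le
      have h2 : (0:ℝ) ≤ (3/2 : ℝ) ^ p := Real.rpow_nonneg (by norm_num) p
      linarith
  -- integrability of g
  obtain ⟨Mψ, hMψ⟩ := hψcs.exists_bound_of_continuous hψsm.continuous
  have hMψ0 : 0 ≤ Mψ := le_trans (norm_nonneg _) (hMψ 0)
  set R : Set (ℝ × ℝ) := Set.Icc (-1 : ℝ) 1 ×ˢ Set.Icc (1/2 : ℝ) (3/2) with hRdef
  have hRm : MeasurableSet R := measurableSet_Icc.prod measurableSet_Icc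
  have hRvol : volume R < ⊤ := (isCompact_Icc.prod isCompact_Icc).measure_lt_top
  set B1 : ℝ := (1/2 : ℝ) ^ (-ν) + (3/2 : ℝ) ^ (-ν) with hB1
  set B2 : ℝ := (1/2 : ℝ) ^ (-η - 1) + (3/2 : ℝ) ^ (-η - 1) with hB2
  have hB10 : 0 ≤ B1 := by
    have := Real.rpow_nonneg (show (0:ℝ) ≤ 1/2 by norm_num) (-ν)
    have := Real.rpow_nonneg (show (0:ℝ) ≤ 3/2 by norm_num) (-ν)
    rw [hB1]; linarith
  have hB20 : 0 ≤ B2 := by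
    have := Real.rpow_nonneg (show (0:ℝ) ≤ 1/2 by norm_num) (-η - 1)
    have := Real.rpow_nonneg (show (0:ℝ) ≤ 3/2 by norm_num) (-η - 1)
    rw [hB2]; linarith
  have hgInt : Integrable g := by
    have hbound : Integrable (R.indicator fun _ => Mψ * B1 * B2) (volume : Measure (ℝ × ℝ)) :=
      (integrable_indicator_iff hRm).2 (integrableOn_const (C := Mψ * B1 * B2) hRvol.ne)
    refine hbound.mono' hgm.aestronglyMeasurable (ae_of_all _ ?_)
    intro q
    by_cases hq : q ∈ R
    · rw [Set.indicator_of_mem hq]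
      have ha := hq.2
      have ha0 : (0:ℝ) < q.2 := by have := ha.1; linarith
      have e1 : |ψ (q.1 / q.2)| ≤ Mψ := by
        have := hMψ (q.1 / q.2); rwa [Real.norm_eq_abs] at this
      have e2 : |q.2 ^ (-ν)| ≤ B1 := by
        rw [abs_of_nonneg (Real.rpow_nonneg ha0.le _)]; exact hRB _ _ ha
      have e4 : |q.2 ^ (-η - 1)| ≤ B2 := by
        rw [abs_of_nonneg (Real.rpow_nonneg ha0.le _)]; exact hRB _ _ ha
      have e3 : |Afun q| ≤ 1 := Afun_abs_le q
      calc ‖g q‖ = |ψ (q.1 / q.2)| * |q.2 ^ (-ν)| * |Afun q| * |q.2 ^ (-η - 1)| := by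
            rw [Real.norm_eq_abs]; simp only [hgdef]
            simp [abs_mul]
        _ ≤ Mψ * B1 * 1 * B2 := by
            gcongr <;> positivity
        _ = Mψ * B1 * B2 := by ring
    · have hA0 : Afun q = 0 := by
        by_cases h2 : q.2 ∈ Set.Icc (1/2 : ℝ) (3/2)
        · exact Afun_eq_zero' (fun h1 => hq ⟨h1, h2⟩)
        · exact Afun_eq_zero h2
      rw [Set.indicator_of_notMem hq]
      have : g q = 0 := by rw [hgdef]; simp [hA0]
      rw [this]
      simp
  -- nonnegativity of g
  have hgnn : ∀ q : ℝ × ℝ, 0 ≤ g q := by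
    rintro ⟨x, a⟩
    by_cases h2 : a ∈ Set.Icc (1/2 : ℝ) (3/2)
    swap
    · have : g (x, a) = 0 := by
        simp only [hgdef]; rw [Afun_eq_zero (q := (x,a)) h2]; ring
      rw [this]
    have ha0 : (0:ℝ) < a := by have := h2.1; linarith
    by_cases hp : ((x, a) : ℝ × ℝ) ∈ Set.Icc (0 : ℝ) 1 ×ˢ Set.Icc (1/2 : ℝ) (3/2)
    · by_cases hm : ((x, a) : ℝ × ℝ) ∈ Set.Icc (-1 : ℝ) 0 ×ˢ Set.Icc (1/2 : ℝ) (3/2)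
      · have hA : Afun (x, a) = 0 := by
          unfold Afun
          rw [Set.indicator_of_mem hp, Set.indicator_of_mem hm]; ring
        have : g (x, a) = 0 := by simp only [hgdef]; rw [hA]; ring
        rw [this]
      · have hA : Afun (x, a) = 1 := by
          unfold Afun
          rw [Set.indicator_of_mem hp, Set.indicator_of_notMem hm]; ring
        have hgq : g (x, a) = ψ (x / a) * a ^ (-ν) * a ^ (-η - 1) := by
          simp only [hgdef]; rw [hA]; ring
        rw [hgq]
        have h1 := hψnn (x / a)
        have h2' := Real.rpow_nonneg ha0.le (-ν)
        have h3 := Real.rpow_nonneg ha0.le (-η - 1)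
        positivity
    · by_cases hm : ((x, a) : ℝ × ℝ) ∈ Set.Icc (-1 : ℝ) 0 ×ˢ Set.Icc (1/2 : ℝ) (3/2)
      · have hx0 : x < 0 := by
          rcases lt_or_ge x 0 with h | h
          · exact h
          · exact absurd ⟨⟨h, by linarith [hm.1.2]⟩, h2⟩ hp
        have hψz : ψ (x / a) = 0 := hψ0 _ (le_of_lt (div_neg_of_neg_of_pos hx0 ha0))
        have : g (x, a) = 0 := by simp only [hgdef]; rw [hψz]; ring
        rw [this]
      · have hA : Afun (x, a) = 0 := by
          unfold Afun
          rw [Set.indicator_of_notMem hp, Set.indicator_of_notMem hm]; ring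
        have : g (x, a) = 0 := by simp only [hgdef]; rw [hA]; ring
        rw [this]
  -- scaling identity
  have hscale : ∀ y : ℝ, 0 < y → y < 1/3 →
      (∫ q in S,
        (ψ (q.1 / q.2) * φ q.2 * q.2 ^ (-ν)) *
          (Afun (q.1 / y, q.2 / y) * y ^ (η - 1)) * q.2 ^ (-η - 1)) = K * y ^ (-ν) := by
    intro y hy hy3
    have hy' : y ≠ 0 := hy.ne'
    set F : ℝ × ℝ → ℝ := S.indicator (fun q : ℝ × ℝ =>
      (ψ (q.1 / q.2) * φ q.2 * q.2 ^ (-ν)) *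
        (Afun (q.1 / y, q.2 / y) * y ^ (η - 1)) * q.2 ^ (-η - 1)) with hFdef
    have hpt : ∀ q : ℝ × ℝ, F (y • q) = y ^ (-ν - 2) * S.indicator g q := by
      rintro ⟨x, a⟩
      have hsmul : y • ((x, a) : ℝ × ℝ) = (y * x, y * a) := rfl
      rw [hFdef]
      by_cases hq : ((x, a) : ℝ × ℝ) ∈ S
      · have ha0 : 0 < a := hq.2
        have hyq : (y • ((x, a) : ℝ × ℝ)) ∈ S := by
          rw [hsmul]
          exact ⟨Set.mem_univ _, mul_pos hy ha0⟩
        rw [Set.indicator_of_mem hyq, Set.indicator_of_mem hq]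
        rw [hsmul]
        simp only
        rw [mul_div_mul_left x a hy', mul_div_cancel_left₀ x hy', mul_div_cancel_left₀ a hy']
        by_cases hA : Afun (x, a) = 0
        · simp only [hgdef]
          rw [hA]; ring
        · have ha2 : a ∈ Set.Icc (1/2 : ℝ) (3/2) := by
            by_contra h
            exact hA (Afun_eq_zero (q := (x, a)) h)
          have hφ1 : φ (y * a) = 1 := by
            apply hφone
            constructor
            · positivity
            · nlinarith [ha2.2]
          have hmr1 : (y * a) ^ (-ν) = y ^ (-ν) * a ^ (-ν) :=
            Real.mul_rpow hy.le ha0.le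
          have hmr2 : (y * a) ^ (-η - 1) = y ^ (-η - 1) * a ^ (-η - 1) :=
            Real.mul_rpow hy.le ha0.le
          have hyy : y ^ (-ν) * y ^ (η - 1) * y ^ (-η - 1) = y ^ (-ν - 2) := by
            rw [← Real.rpow_add hy, ← Real.rpow_add hy]
            ring_nf
          rw [hφ1, hmr1, hmr2]
          simp only [hgdef]
          rw [← hyy]
          ring
      · have ha : a ≤ 0 := by
          by_contra h
          push_neg at h
          exact hq ⟨Set.mem_univ _, h⟩
        have hyq : (y • ((x, a) : ℝ × ℝ)) ∉ S := by
          rw [hsmul]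
          intro h
          have : (0:ℝ) < y * a := h.2
          nlinarith
        rw [Set.indicator_of_notMem hyq, Set.indicator_of_notMem hq]
        ring
    have hfr : Module.finrank ℝ (ℝ × ℝ) = 2 := by
      simp [Module.finrank_prod]
    have key := Measure.integral_comp_smul (volume : Measure (ℝ × ℝ)) F y
    rw [hfr] at key
    simp only [hpt] at key
    rw [integral_const_mul, integral_indicator hSm] at key
    rw [hFdef, integral_indicator hSm] at key
    have habs : |((y ^ 2 : ℝ))⁻¹| = (y ^ 2)⁻¹ := abs_of_pos (by positivity)
    rw [habs, smul_eq_mul] at key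
    have hy2 : (y:ℝ) ^ 2 ≠ 0 := by positivity
    have hpow : y ^ (2:ℕ) * y ^ (-ν - 2) = y ^ (-ν) := by
      rw [← Real.rpow_natCast y 2, ← Real.rpow_add hy]
      norm_num
    calc (∫ q in S,
        (ψ (q.1 / q.2) * φ q.2 * q.2 ^ (-ν)) *
          (Afun (q.1 / y, q.2 / y) * y ^ (η - 1)) * q.2 ^ (-η - 1))
        = y ^ 2 * ((y ^ 2)⁻¹ * (∫ q in S,
            (ψ (q.1 / q.2) * φ q.2 * q.2 ^ (-ν)) *
              (Afun (q.1 / y, q.2 / y) * y ^ (η - 1)) * q.2 ^ (-η - 1))) := by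
          rw [← mul_assoc, mul_inv_cancel₀ hy2, one_mul]
      _ = y ^ 2 * (y ^ (-ν - 2) * K) := by rw [← key]
      _ = K * (y ^ (2:ℕ) * y ^ (-ν - 2)) := by ring
      _ = K * y ^ (-ν) := by rw [hpow]
  -- positivity of K
  have hKpos : 0 < K := by
    set B : Set (ℝ × ℝ) := Set.Icc (3/8 : ℝ) (5/8) ×ˢ Set.Icc (1 : ℝ) (3/2) with hBdef
    have hBm : MeasurableSet B := measurableSet_Icc.prod measurableSet_Icc
    have hBS : B ⊆ S := by
      rintro ⟨x, a⟩ hq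
      exact ⟨Set.mem_univ _, lt_of_lt_of_le one_pos hq.2.1⟩
    set m : ℝ := min 1 ((3/2 : ℝ) ^ (-ν + (-η - 1))) with hmdef
    have hm0 : 0 < m := lt_min one_pos (Real.rpow_pos_of_pos (by norm_num) _)
    have hgB : ∀ q ∈ B, m ≤ g q := by
      rintro ⟨x, a⟩ ⟨hx, ha⟩
      have ha0 : (0:ℝ) < a := lt_of_lt_of_le one_pos ha.1
      have hψ1 : ψ (x / a) = 1 := by
        apply hψone
        constructor
        · rw [le_div_iff₀ ha0]
          nlinarith [hx.1, ha.2]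
        · rw [div_le_iff₀ ha0]
          nlinarith [hx.2, ha.1]
      have hp : ((x, a) : ℝ × ℝ) ∈ Set.Icc (0 : ℝ) 1 ×ˢ Set.Icc (1/2 : ℝ) (3/2) :=
        ⟨⟨by linarith [hx.1], by linarith [hx.2]⟩, ⟨by linarith [ha.1], ha.2⟩⟩
      have hm' : ((x, a) : ℝ × ℝ) ∉ Set.Icc (-1 : ℝ) 0 ×ˢ Set.Icc (1/2 : ℝ) (3/2) := by
        intro h
        have := h.1.2
        simp only at this
        linarith [hx.1]
      have hA : Afun (x, a) = 1 := by
        unfold Afun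
        rw [Set.indicator_of_mem hp, Set.indicator_of_notMem hm']; ring
      have hgq : g (x, a) = a ^ (-ν + (-η - 1)) := by
        simp only [hgdef]
        rw [hψ1, hA, Real.rpow_add ha0]
        ring
      rw [hgq]
      rcases le_or_gt 0 (-ν + (-η - 1)) with hpw | hpw
      · calc m ≤ 1 := min_le_left _ _
          _ = (1:ℝ) ^ (-ν + (-η - 1)) := (Real.one_rpow _).symm
          _ ≤ a ^ (-ν + (-η - 1)) := Real.rpow_le_rpow zero_le_one ha.1 hpw
      · have h2 : (3/2 : ℝ) ^ (-ν + (-η - 1)) ≤ a ^ (-ν + (-η - 1)) :=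
          Real.rpow_le_rpow_of_nonpos ha0 ha.2 hpw.le
        exact le_trans (min_le_right _ _) h2
    have hvolB : (volume B).toReal = 1/8 := by
      rw [hBdef, Measure.volume_eq_prod, Measure.prod_prod, Real.volume_Icc, Real.volume_Icc]
      rw [← ENNReal.ofReal_mul (by norm_num)]
      rw [ENNReal.toReal_ofReal (by norm_num)]
      norm_num
    have h1 : (∫ _ in B, m) ≤ ∫ q in B, g q :=
      setIntegral_mono_on (integrableOn_const (C := m) (by
        rw [hBdef]; exact (isCompact_Icc.prod isCompact_Icc).measure_lt_top.ne))
        hgInt.integrableOn hBm hgB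
    have h2 : (∫ q in B, g q) ≤ ∫ q in S, g q :=
      setIntegral_mono_set hgInt.integrableOn
        (Eventually.of_forall (fun q => hgnn q)) (HasSubset.Subset.eventuallyLE hBS)
    have h3 : (∫ _ in B, m) = m / 8 := by
      rw [setIntegral_const]; show (volume B).toReal • m = m / 8; rw [hvolB, smul_eq_mul]
      ring
    rw [hKdef]
    calc (0:ℝ) < m / 8 := by positivity
      _ = ∫ _ in B, m := h3.symm
      _ ≤ ∫ q in B, g q := h1
      _ ≤ ∫ q in S, g q := h2
  refine ⟨K, K, 1/3, hKpos, hKpos, by norm_num, by norm_num, ?_, ?_⟩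
  · intro y hy hy3
    constructor
    · exact le_of_eq (hscale y hy hy3).symm
    · exact le_of_eq (hscale y hy hy3)
  · have base : Tendsto (fun y : ℝ => y ^ (-ν)) (nhdsWithin 0 (Set.Ioi 0)) atTop := by
      have h := (tendsto_rpow_atTop hν).comp tendsto_inv_nhdsGT_zero
      apply h.congr'
      filter_upwards [self_mem_nhdsWithin] with y hy
      have hy0 : (0:ℝ) < y := hy
      show (y⁻¹) ^ ν = y ^ (-ν)
      rw [Real.rpow_neg hy0.le, ← Real.inv_rpow hy0.le]
    have h2 : Tendsto (fun y : ℝ => K * y ^ (-ν)) (nhdsWithin 0 (Set.Ioi 0)) atTop :=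
      base.const_mul_atTop hKpos
    apply h2.congr'
    filter_upwards [Ioo_mem_nhdsGT_of_mem (show (0:ℝ) ∈ Set.Ico (0:ℝ) (1/3) by norm_num)]
      with y hy
    exact (hscale y hy.1 hy.2).symm
end

section
/- Let G be a Lie group with right Haar measure ρ, let χ be a smooth positive character of G, let X₁, …, X_ℓ be left-invariant vector fields on G, let k ∈ ℕ and p ∈ [1,∞). Then there exist constants c₁, c₂ > 0 (depending only on χ, the vector fields, k and p) such that for every smooth function f on G, c₁ · Σ_{m=0}^{k} Σ_{J ∈ {1,…,ℓ}^m} ‖χ · X_J f‖_{L^p(ρ)} ≤ Σ_{m=0}^{k} Σ_{J ∈ {1,…,ℓ}^m} ‖X_J(χ f)‖_{L^p(ρ)} ≤ c₂ · Σ_{m=0}^{k} Σ_{J ∈ {1,…,ℓ}^m} ‖χ · X_J f‖_{L^p(ρ)}, where X_J = X_{j₁}⋯X_{j_m} for J = (j₁,…,j_m), the empty word (m = 0) giving the identity operator; the inequalities are understood in [0,∞]. -/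
/-!
A left-invariant vector field maps a character to a multiple of itself: `X χ = (X χ)(1) • χ`.
With the Leibniz rule this gives `X_J (χ f) = χ · Z_J f` for the shifted fields `Zᵢ = Xᵢ + cᵢ`,
so the middle quantity is the weighted sum of the first one with `X` replaced by `Z`.
Writing `Z_{J i} f = Z_J (Xᵢ f) + cᵢ Z_J f` and inducting on the order, the Minkowski inequality
bounds the `Z`-sum of order `k` by a multiple of the `X`-sum of order `k`; since `Xᵢ = Zᵢ - cᵢ`
the same argument gives the converse bound.
-/

open Manifold MeasureTheory ENNReal

open scoped NNReal

/-- Iterated application `X_J = X_{j₁} ⋯ X_{j_m}` of a family of operators,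
for a word `J = (j₁, …, j_m)`; the empty word gives the identity operator. -/
def applyWord {G : Type*} {ℓ : ℕ} (X : Fin ℓ → ((G → ℝ) → (G → ℝ))) :
    (m : ℕ) → (Fin m → Fin ℓ) → (G → ℝ) → (G → ℝ)
  | 0, _, f => f
  | m + 1, J, f => X (J 0) (applyWord X m (fun i => J i.succ) f)

theorem Fin.sum_univ_pi_succ_snoc {β M : Type*} [Fintype β] [AddCommMonoid M] {m : ℕ}
    (F : (Fin (m + 1) → β) → M) :
    ∑ J, F J = ∑ i, ∑ J : Fin m → β, F (Fin.snoc J i) :=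
  ((Fintype.sum_equiv (Fin.snocEquiv fun _ => β) _ _ fun _ => rfl).symm).trans
    (Fintype.sum_prod_type _)

section Words

variable {G : Type*} {ℓ : ℕ}

theorem applyWord_snoc (X : Fin ℓ → (G → ℝ) → G → ℝ) (i : Fin ℓ) (f : G → ℝ) :
    ∀ (m : ℕ) (J : Fin m → Fin ℓ),
      applyWord X (m + 1) (Fin.snoc J i) f = applyWord X m J (X i f)
  | 0, _ => by simp [applyWord, Fin.snoc]
  | m + 1, J => by
    have htail : (fun t : Fin (m + 1) => (Fin.snoc J i : Fin (m + 2) → Fin ℓ) t.succ) =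
        Fin.snoc (fun t => J t.succ) i := by
      ext t
      refine Fin.lastCases ?_ (fun s => ?_) t
      · simp
      · rw [Fin.succ_castSucc, Fin.snoc_castSucc, Fin.snoc_castSucc]
    change X _ (applyWord X (m + 1) _ f) = X (J 0) (applyWord X m _ (X i f))
    rw [htail, applyWord_snoc X i f m, Fin.snoc_apply_zero]

def shiftOp (X : Fin ℓ → (G → ℝ) → G → ℝ) (c : Fin ℓ → ℝ) : Fin ℓ → (G → ℝ) → G → ℝ :=
  fun i f => X i f + c i • f

theorem shiftOp_shiftOp_neg (X : Fin ℓ → (G → ℝ) → G → ℝ) (c : Fin ℓ → ℝ) :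
    shiftOp (shiftOp X c) (-c) = X := by
  ext i f
  simp [shiftOp]

variable (V : Submodule ℝ (G → ℝ)) {X : Fin ℓ → (G → ℝ) → G → ℝ}

theorem applyWord_mem (hXV : ∀ i, ∀ f ∈ V, X i f ∈ V) :
    ∀ (m : ℕ) (J : Fin m → Fin ℓ), ∀ f ∈ V, applyWord X m J f ∈ V
  | 0, _, _, hf => hf
  | m + 1, _, f, hf => hXV _ _ (applyWord_mem hXV m _ f hf)

theorem applyWord_add_smul (hXV : ∀ i, ∀ f ∈ V, X i f ∈ V)
    (hX : ∀ i, ∀ f ∈ V, ∀ g ∈ V, ∀ a : ℝ, X i (f + a • g) = X i f + a • X i g) :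
    ∀ (m : ℕ) (J : Fin m → Fin ℓ), ∀ f ∈ V, ∀ g ∈ V, ∀ a : ℝ,
      applyWord X m J (f + a • g) = applyWord X m J f + a • applyWord X m J g
  | 0, _, _, _, _, _, _ => rfl
  | m + 1, J, f, hf, g, hg, a => by
    simp only [applyWord]
    rw [applyWord_add_smul hXV hX m _ f hf g hg a,
      hX _ _ (applyWord_mem V hXV m _ f hf) _ (applyWord_mem V hXV m _ g hg)]

theorem shiftOp_mem (hXV : ∀ i, ∀ f ∈ V, X i f ∈ V) (c : Fin ℓ → ℝ) :
    ∀ i, ∀ f ∈ V, shiftOp X c i f ∈ V :=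
  fun i f hf => V.add_mem (hXV i f hf) (V.smul_mem (c i) hf)

theorem shiftOp_add_smul
    (hX : ∀ i, ∀ f ∈ V, ∀ g ∈ V, ∀ a : ℝ, X i (f + a • g) = X i f + a • X i g)
    (c : Fin ℓ → ℝ) :
    ∀ i, ∀ f ∈ V, ∀ g ∈ V, ∀ a : ℝ,
      shiftOp X c i (f + a • g) = shiftOp X c i f + a • shiftOp X c i g := by
  intro i f hf g hg a
  simp only [shiftOp, hX i f hf g hg a, smul_add, smul_comm (c i) a]
  abel

theorem applyWord_mul_eq_mul_applyWord_shiftOp (hXV : ∀ i, ∀ f ∈ V, X i f ∈ V)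
    (hleib : ∀ i f g, f ∈ V → g ∈ V → X i (f * g) = f * X i g + g * X i f)
    {χ : G → ℝ} (hχ : χ ∈ V) {c : Fin ℓ → ℝ} (hXχ : ∀ i, X i χ = c i • χ) :
    ∀ (m : ℕ) (J : Fin m → Fin ℓ), ∀ f ∈ V,
      applyWord X m J (χ * f) = χ * applyWord (shiftOp X c) m J f
  | 0, _, _, _ => rfl
  | m + 1, J, f, hf => by
    have hg := applyWord_mem V (shiftOp_mem V hXV c) m (fun t => J t.succ) f hf
    change X (J 0) (applyWord X m _ (χ * f)) = χ * shiftOp X c (J 0) _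
    rw [applyWord_mul_eq_mul_applyWord_shiftOp hXV hleib hχ hXχ m _ f hf,
      hleib _ χ _ hχ hg, hXχ]
    ext x
    simp only [shiftOp, Pi.add_apply, Pi.mul_apply, Pi.smul_apply, smul_eq_mul]
    ring

end Words

section WordNormSum

variable {G : Type*} {ℓ : ℕ}

/-- With `N g = ‖χ g‖_{L^p}` this is `Σ_{m ≤ k} Σ_{|J| = m} ‖χ X_J f‖_{L^p}`. -/
noncomputable def wordNormSum (X : Fin ℓ → (G → ℝ) → G → ℝ) (N : (G → ℝ) → ℝ≥0∞) (k : ℕ)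
    (f : G → ℝ) : ℝ≥0∞ :=
  ∑ m ∈ Finset.range (k + 1), ∑ J : Fin m → Fin ℓ, N (applyWord X m J f)

variable (X : Fin ℓ → (G → ℝ) → G → ℝ) (N : (G → ℝ) → ℝ≥0∞)

theorem wordNormSum_zero (f : G → ℝ) : wordNormSum X N 0 f = N f := by
  simp [wordNormSum, applyWord]

theorem wordNormSum_succ (k : ℕ) (f : G → ℝ) :
    wordNormSum X N (k + 1) f = N f + ∑ i, wordNormSum X N k (X i f) := by
  simp only [wordNormSum]
  rw [Finset.sum_range_succ', add_comm, Finset.sum_comm]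
  congr 1
  · simp [applyWord]
  · refine Finset.sum_congr rfl fun m _ => ?_
    rw [Fin.sum_univ_pi_succ_snoc]
    simp only [applyWord_snoc]

theorem wordNormSum_le_succ (k : ℕ) (f : G → ℝ) :
    wordNormSum X N k f ≤ wordNormSum X N (k + 1) f :=
  Finset.sum_le_sum_of_subset (Finset.range_subset_range.2 (Nat.le_succ _))

variable (V : Submodule ℝ (G → ℝ)) {X N}

theorem wordNormSum_add_smul_le (hXV : ∀ i, ∀ f ∈ V, X i f ∈ V)
    (hX : ∀ i, ∀ f ∈ V, ∀ g ∈ V, ∀ a : ℝ, X i (f + a • g) = X i f + a • X i g)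
    (hN : ∀ f ∈ V, ∀ g ∈ V, ∀ a : ℝ, N (f + a • g) ≤ N f + ‖a‖ₑ * N g) (k : ℕ) :
    ∀ f ∈ V, ∀ g ∈ V, ∀ a : ℝ,
      wordNormSum X N k (f + a • g) ≤ wordNormSum X N k f + ‖a‖ₑ * wordNormSum X N k g := by
  intro f hf g hg a
  simp only [wordNormSum, Finset.mul_sum, ← Finset.sum_add_distrib]
  gcongr with m _ J
  rw [applyWord_add_smul V hXV hX m J f hf g hg a]
  exact hN _ (applyWord_mem V hXV m J f hf) _ (applyWord_mem V hXV m J g hg) a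

theorem exists_wordNormSum_shiftOp_le (hXV : ∀ i, ∀ f ∈ V, X i f ∈ V)
    (hX : ∀ i, ∀ f ∈ V, ∀ g ∈ V, ∀ a : ℝ, X i (f + a • g) = X i f + a • X i g)
    (hN : ∀ f ∈ V, ∀ g ∈ V, ∀ a : ℝ, N (f + a • g) ≤ N f + ‖a‖ₑ * N g)
    (c : Fin ℓ → ℝ) (k : ℕ) :
    ∃ C : ℝ≥0, ∀ f ∈ V, wordNormSum (shiftOp X c) N k f ≤ C * wordNormSum X N k f := by
  induction k with
  | zero => exact ⟨1, fun f _ => by simp [wordNormSum_zero]⟩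
  | succ k ih =>
    obtain ⟨C, hC⟩ := ih
    set K : ℝ≥0 := ∑ i, ‖c i‖₊
    refine ⟨1 + C + K * C, fun f hf => ?_⟩
    have hNW : N f ≤ wordNormSum X N (k + 1) f := by rw [wordNormSum_succ]; exact le_self_add
    have hXW : ∑ i, wordNormSum X N k (X i f) ≤ wordNormSum X N (k + 1) f := by
      rw [wordNormSum_succ]; exact le_add_self
    have hfW : wordNormSum X N k f ≤ wordNormSum X N (k + 1) f := wordNormSum_le_succ X N k f
    set W := wordNormSum X N (k + 1) f
    calc wordNormSum (shiftOp X c) N (k + 1) f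
        = N f + ∑ i, wordNormSum (shiftOp X c) N k (X i f + c i • f) :=
          wordNormSum_succ _ _ k f
      _ ≤ N f + ∑ i, (C * wordNormSum X N k (X i f) + ‖c i‖ₑ * (C * wordNormSum X N k f)) := by
          gcongr with i
          refine (wordNormSum_add_smul_le V (shiftOp_mem V hXV c) (shiftOp_add_smul V hX c) hN k
            _ (hXV i f hf) f hf (c i)).trans ?_
          gcongr
          exacts [hC _ (hXV i f hf), hC f hf]
      _ = N f + C * ∑ i, wordNormSum X N k (X i f) + K * C * wordNormSum X N k f := by
          simp only [Finset.sum_add_distrib, ← Finset.mul_sum, ← Finset.sum_mul, K,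
            enorm_eq_nnnorm, ENNReal.ofNNReal_finsetSum]
          ring
      _ ≤ W + C * W + K * C * W := by gcongr
      _ = ↑(1 + C + K * C) * W := by push_cast; ring

theorem exists_wordNormSum_shiftOp_equiv (hXV : ∀ i, ∀ f ∈ V, X i f ∈ V)
    (hX : ∀ i, ∀ f ∈ V, ∀ g ∈ V, ∀ a : ℝ, X i (f + a • g) = X i f + a • X i g)
    (hN : ∀ f ∈ V, ∀ g ∈ V, ∀ a : ℝ, N (f + a • g) ≤ N f + ‖a‖ₑ * N g)
    (c : Fin ℓ → ℝ) (k : ℕ) :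
    ∃ c₁ c₂ : ℝ, 0 < c₁ ∧ 0 < c₂ ∧ ∀ f ∈ V,
      ENNReal.ofReal c₁ * wordNormSum X N k f ≤ wordNormSum (shiftOp X c) N k f ∧
        wordNormSum (shiftOp X c) N k f ≤ ENNReal.ofReal c₂ * wordNormSum X N k f := by
  obtain ⟨C, hC⟩ := exists_wordNormSum_shiftOp_le V hXV hX hN c k
  obtain ⟨D, hD⟩ := exists_wordNormSum_shiftOp_le V (shiftOp_mem V hXV c)
    (shiftOp_add_smul V hX c) hN (-c) k
  rw [shiftOp_shiftOp_neg] at hD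
  have hle_succ : ∀ r : ℝ≥0, (r : ℝ≥0∞) ≤ ENNReal.ofReal (r + 1) := fun r => by
    rw [← ENNReal.ofReal_coe_nnreal]; exact ENNReal.ofReal_le_ofReal (by linarith)
  refine ⟨(D + 1 : ℝ)⁻¹, C + 1, by positivity, by positivity, fun f hf => ⟨?_, ?_⟩⟩
  · calc ENNReal.ofReal (D + 1 : ℝ)⁻¹ * wordNormSum X N k f
        ≤ ENNReal.ofReal (D + 1 : ℝ)⁻¹ *
            (ENNReal.ofReal (D + 1) * wordNormSum (shiftOp X c) N k f) := by
          gcongr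
          exact (hD f hf).trans (by gcongr; exact hle_succ D)
      _ = wordNormSum (shiftOp X c) N k f := by
          rw [← mul_assoc, ← ENNReal.ofReal_mul (by positivity), inv_mul_cancel₀ (by positivity),
            ENNReal.ofReal_one, one_mul]
  · exact (hC f hf).trans (by gcongr; exact hle_succ C)

end WordNormSum

theorem apply_eq_apply_one_smul_of_leftInvariant {G : Type*} [Monoid G]
    (D : (G → ℝ) → G → ℝ) {χ : G → ℝ} (hχ : ∀ x y, χ (x * y) = χ x * χ y)
    (hsmul : ∀ a : ℝ, D (a • χ) = a • D χ)
    (hinv : ∀ y, D (fun x => χ (y * x)) = fun x => D χ (y * x)) :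
    D χ = D χ 1 • χ := by
  ext y
  have htrans : (fun x => χ (y * x)) = χ y • χ := by
    ext x
    simp [hχ]
  have := congrFun (hinv y) 1
  rw [htrans, hsmul, mul_one] at this
  simp [← this, mul_comm]

theorem eLpNorm_mul_add_smul_le {α : Type*} [MeasurableSpace α] {μ : Measure α}
    {p : ℝ≥0∞} (hp : 1 ≤ p) {w f g : α → ℝ}
    (hf : AEStronglyMeasurable (fun x => w x * f x) μ)
    (hg : AEStronglyMeasurable (fun x => w x * g x) μ) (a : ℝ) :
    eLpNorm (fun x => w x * (f + a • g) x) p μ ≤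
      eLpNorm (fun x => w x * f x) p μ + ‖a‖ₑ * eLpNorm (fun x => w x * g x) p μ := by
  have hsplit :
      (fun x => w x * (f + a • g) x) = (fun x => w x * f x) + a • fun x => w x * g x := by
    ext x
    simp only [Pi.add_apply, Pi.smul_apply, smul_eq_mul]
    ring
  rw [hsplit]
  exact (eLpNorm_add_le hf (hg.const_smul a) hp).trans (add_le_add_right eLpNorm_const_smul_le _)

def contMDiffSubmodule {E : Type*} [NormedAddCommGroup E] [NormedSpace ℝ E]
    {H : Type*} [TopologicalSpace H] (I : ModelWithCorners ℝ E H)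
    (G : Type*) [TopologicalSpace G] [ChartedSpace H G] (n : WithTop ℕ∞) :
    Submodule ℝ (G → ℝ) where
  carrier := {f | ContMDiff I 𝓘(ℝ) n f}
  add_mem' hf hg := hf.add hg
  zero_mem' := contMDiff_const
  smul_mem' a _ hf := (contMDiff_const : ContMDiff I 𝓘(ℝ) n fun _ : G => a).smul hf

theorem stmt_16_general
    {E : Type*} [NormedAddCommGroup E] [NormedSpace ℝ E]
    {H : Type*} [TopologicalSpace H] {I : ModelWithCorners ℝ E H}
    {G : Type*} [TopologicalSpace G] [ChartedSpace H G] [Group G]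
    [MeasurableSpace G] [BorelSpace G]
    (ρ : Measure G)
    (χ : G → ℝ) (hχsmooth : ContMDiff I 𝓘(ℝ) (⊤ : ℕ∞) χ)
    (hχhom : ∀ x y : G, χ (x * y) = χ x * χ y)
    (ℓ : ℕ) (X : Fin ℓ → ((G → ℝ) → (G → ℝ)))
    (hXsmooth : ∀ i, ∀ f : G → ℝ, ContMDiff I 𝓘(ℝ) (⊤ : ℕ∞) f → ContMDiff I 𝓘(ℝ) (⊤ : ℕ∞) (X i f))
    (hXadd : ∀ i, ∀ f g : G → ℝ, ContMDiff I 𝓘(ℝ) (⊤ : ℕ∞) f → ContMDiff I 𝓘(ℝ) (⊤ : ℕ∞) g →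
      X i (f + g) = X i f + X i g)
    (hXsmul : ∀ i, ∀ (c : ℝ) (f : G → ℝ), ContMDiff I 𝓘(ℝ) (⊤ : ℕ∞) f → X i (c • f) = c • X i f)
    (hXleibniz : ∀ i, ∀ f g : G → ℝ, ContMDiff I 𝓘(ℝ) (⊤ : ℕ∞) f → ContMDiff I 𝓘(ℝ) (⊤ : ℕ∞) g →
      X i (f * g) = f * X i g + g * X i f)
    (hXleftinv : ∀ i, ∀ (y : G) (f : G → ℝ), ContMDiff I 𝓘(ℝ) (⊤ : ℕ∞) f →
      X i (fun x => f (y * x)) = fun x => X i f (y * x))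
    (k : ℕ) (p : ℝ) (hp : 1 ≤ p) :
    ∃ c₁ c₂ : ℝ, 0 < c₁ ∧ 0 < c₂ ∧
      ∀ f : G → ℝ, ContMDiff I 𝓘(ℝ) (⊤ : ℕ∞) f →
        (ENNReal.ofReal c₁ *
            ∑ m ∈ Finset.range (k + 1), ∑ J : Fin m → Fin ℓ,
              eLpNorm (fun x => χ x * applyWord X m J f x) (ENNReal.ofReal p) ρ ≤
          ∑ m ∈ Finset.range (k + 1), ∑ J : Fin m → Fin ℓ,
            eLpNorm (applyWord X m J (fun x => χ x * f x)) (ENNReal.ofReal p) ρ) ∧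
        (∑ m ∈ Finset.range (k + 1), ∑ J : Fin m → Fin ℓ,
            eLpNorm (applyWord X m J (fun x => χ x * f x)) (ENNReal.ofReal p) ρ ≤
          ENNReal.ofReal c₂ *
            ∑ m ∈ Finset.range (k + 1), ∑ J : Fin m → Fin ℓ,
              eLpNorm (fun x => χ x * applyWord X m J f x) (ENNReal.ofReal p) ρ) := by
  set V := contMDiffSubmodule I G (⊤ : ℕ∞)
  have hX : ∀ i, ∀ f ∈ V, ∀ g ∈ V, ∀ a : ℝ, X i (f + a • g) = X i f + a • X i g :=
    fun i f hf g hg a => by rw [hXadd i f _ hf (V.smul_mem a hg), hXsmul i a g hg]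
  have hXχ : ∀ i, X i χ = X i χ 1 • χ := fun i =>
    apply_eq_apply_one_smul_of_leftInvariant (X i) hχhom (fun a => hXsmul i a χ hχsmooth)
      (fun y => hXleftinv i y χ hχsmooth)
  set N : (G → ℝ) → ℝ≥0∞ := fun g => eLpNorm (fun x => χ x * g x) (ENNReal.ofReal p) ρ
  have hN : ∀ f ∈ V, ∀ g ∈ V, ∀ a : ℝ, N (f + a • g) ≤ N f + ‖a‖ₑ * N g :=
    fun f hf g hg a => eLpNorm_mul_add_smul_le (ENNReal.one_le_ofReal.2 hp)
      (hχsmooth.continuous.mul hf.continuous).aestronglyMeasurable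
      (hχsmooth.continuous.mul hg.continuous).aestronglyMeasurable a
  obtain ⟨c₁, c₂, hc₁, hc₂, hequiv⟩ :=
    exists_wordNormSum_shiftOp_equiv V hXsmooth hX hN (fun i => X i χ 1) k
  refine ⟨c₁, c₂, hc₁, hc₂, fun f hf => ?_⟩
  have hconj : ∀ m J, applyWord X m J (fun x => χ x * f x) =
      fun x => χ x * applyWord (shiftOp X fun i => X i χ 1) m J f x := fun m J =>
    applyWord_mul_eq_mul_applyWord_shiftOp V hXsmooth hXleibniz hχsmooth hXχ m J f hf
  simp only [hconj]
  exact hequiv f hf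

/-- Let `G` be a Lie group with right Haar measure `ρ`, `χ` a smooth
positive character of `G`, `X₁, …, X_ℓ` left-invariant vector fields on `G`, `k ∈ ℕ`
and `p ∈ [1,∞)`. Then there exist constants `c₁, c₂ > 0` such that for every smooth
`f : G → ℝ`,
`c₁ Σ_{m ≤ k} Σ_J ‖χ·X_J f‖_{L^p(ρ)} ≤ Σ_{m ≤ k} Σ_J ‖X_J(χ f)‖_{L^p(ρ)}
  ≤ c₂ Σ_{m ≤ k} Σ_J ‖χ·X_J f‖_{L^p(ρ)}`,
the inequalities being understood in `[0,∞]`. -/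
theorem stmt_16
    {E : Type*} [NormedAddCommGroup E] [NormedSpace ℝ E]
    {H : Type*} [TopologicalSpace H] {I : ModelWithCorners ℝ E H}
    {G : Type*} [TopologicalSpace G] [ChartedSpace H G] [Group G] [LieGroup I (⊤ : ℕ∞) G]
    [MeasurableSpace G] [BorelSpace G]
    (ρ : Measure G) [ρ.IsMulRightInvariant] [IsFiniteMeasureOnCompacts ρ]
    [ρ.IsOpenPosMeasure]
    (χ : G → ℝ) (hχpos : ∀ x, 0 < χ x) (hχsmooth : ContMDiff I 𝓘(ℝ) (⊤ : ℕ∞) χ)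
    (hχhom : ∀ x y : G, χ (x * y) = χ x * χ y)
    (ℓ : ℕ) (X : Fin ℓ → ((G → ℝ) → (G → ℝ)))
    (hXsmooth : ∀ i, ∀ f : G → ℝ, ContMDiff I 𝓘(ℝ) (⊤ : ℕ∞) f → ContMDiff I 𝓘(ℝ) (⊤ : ℕ∞) (X i f))
    (hXadd : ∀ i, ∀ f g : G → ℝ, ContMDiff I 𝓘(ℝ) (⊤ : ℕ∞) f → ContMDiff I 𝓘(ℝ) (⊤ : ℕ∞) g →
      X i (f + g) = X i f + X i g)
    (hXsmul : ∀ i, ∀ (c : ℝ) (f : G → ℝ), ContMDiff I 𝓘(ℝ) (⊤ : ℕ∞) f → X i (c • f) = c • X i f)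
    (hXleibniz : ∀ i, ∀ f g : G → ℝ, ContMDiff I 𝓘(ℝ) (⊤ : ℕ∞) f → ContMDiff I 𝓘(ℝ) (⊤ : ℕ∞) g →
      X i (f * g) = f * X i g + g * X i f)
    (hXleftinv : ∀ i, ∀ (y : G) (f : G → ℝ), ContMDiff I 𝓘(ℝ) (⊤ : ℕ∞) f →
      X i (fun x => f (y * x)) = fun x => X i f (y * x))
    (k : ℕ) (p : ℝ) (hp : 1 ≤ p) :
    ∃ c₁ c₂ : ℝ, 0 < c₁ ∧ 0 < c₂ ∧
      ∀ f : G → ℝ, ContMDiff I 𝓘(ℝ) (⊤ : ℕ∞) f →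
        (ENNReal.ofReal c₁ *
            ∑ m ∈ Finset.range (k + 1), ∑ J : Fin m → Fin ℓ,
              eLpNorm (fun x => χ x * applyWord X m J f x) (ENNReal.ofReal p) ρ ≤
          ∑ m ∈ Finset.range (k + 1), ∑ J : Fin m → Fin ℓ,
            eLpNorm (applyWord X m J (fun x => χ x * f x)) (ENNReal.ofReal p) ρ) ∧
        (∑ m ∈ Finset.range (k + 1), ∑ J : Fin m → Fin ℓ,
            eLpNorm (applyWord X m J (fun x => χ x * f x)) (ENNReal.ofReal p) ρ ≤
          ENNReal.ofReal c₂ *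
            ∑ m ∈ Finset.range (k + 1), ∑ J : Fin m → Fin ℓ,
              eLpNorm (fun x => χ x * applyWord X m J f x) (ENNReal.ofReal p) ρ) :=
  stmt_16_general ρ χ hχsmooth hχhom ℓ X hXsmooth hXadd hXsmul hXleibniz hXleftinv k p hp
end
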